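/- In an exponential vector space X, if Q(X) generates X\X₀, then every maximal orderly independent subset of Q(X) is a basis of X\X₀. -/
import Mathlib


/-- An exponential vector space (evs) over a field `K`. -/
class EVS (K : Type*) [Field K] (X : Type*) extends PartialOrder X, AddCommMonoid X, SMul K X where
  add_le_add_right' : ∀ {x y : X}, x ≤ y → ∀ z : X, x + z ≤ y + z
  smul_le_smul' : ∀ {x y : X}, x ≤ y → ∀ α : K, α • x ≤ α • y
  smul_add' : ∀ (α : K) (x y : X), α • (x + y) = α • x + α • y
  mul_smul' : ∀ (α β : K) (x : X), α • (β • x) = (α * β) • x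
  add_smul_le' : ∀ (α β : K) (x : X), (α + β) • x ≤ α • x + β • x
  one_smul' : ∀ x : X, (1 : K) • x = x
  smul_eq_zero_iff' : ∀ (α : K) (x : X), α • x = 0 ↔ α = 0 ∨ x = 0
  primitive_iff' : ∀ x : X, x + (-1 : K) • x = 0 ↔ (∀ y : X, y ≤ x → y = x)
  exists_primitive' : ∀ x : X, ∃ p : X, (∀ y : X, y ≤ p → y = p) ∧ p ≤ x

namespace EVS

variable (K : Type*) [Field K]

/-- The primitive space `X₀`: the set of minimal elements of `X`. -/
def primSpace (X : Type*) [EVS K X] : Set X := {x | ∀ y, y ≤ x → y = x}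

/-- The testing set `L(x)`. -/
def L {X : Type*} [EVS K X] (x : X) : Set X :=
  {z | ∃ α : K, α ≠ 0 ∧ ∃ p ∈ primSpace K X, α • x + p ≤ z}

/-- `B` is a generator of `X ∖ X₀`. -/
def Generates {X : Type*} [EVS K X] (B : Set X) : Prop :=
  B ⊆ (primSpace K X)ᶜ ∧ (primSpace K X)ᶜ = ⋃ x ∈ B, L K x

/-- `B` is an orderly independent subset of `X ∖ X₀`. -/
def OrderlyIndep {X : Type*} [EVS K X] (B : Set X) : Prop :=
  B ⊆ (primSpace K X)ᶜ ∧ ∀ x ∈ B, ∀ y ∈ B, x ≠ y → x ∉ L K y ∧ y ∉ L K x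

/-- `B` is a basis of `X ∖ X₀`. -/
def IsBasis {X : Type*} [EVS K X] (B : Set X) : Prop :=
  OrderlyIndep K B ∧ Generates K B

/-- The feasible set `Q(X)`. -/
def Q (X : Type*) [EVS K X] : Set X :=
  {x | x ∉ primSpace K X ∧ ∀ y, y ≤ x → y ∉ primSpace K X → y ∈ L K x}

/-- An order-isomorphism between two evs over a common field `K`. -/
structure IsOrderIso {X Y : Type*} [EVS K X] [EVS K Y] (φ : X → Y) : Prop where
  bijective : Function.Bijective φ
  map_add : ∀ x y : X, φ (x + y) = φ x + φ y
  map_smul : ∀ (α : K) (x : X), φ (α • x) = α • φ x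
  le_iff : ∀ x y : X, x ≤ y ↔ φ x ≤ φ y

end EVS

section Helpers

open EVS

variable {K X : Type*} [Field K] [EVS K X]

lemma evs_smul_zero (α : K) : α • (0 : X) = 0 :=
  (EVS.smul_eq_zero_iff' α (0 : X)).mpr (Or.inr rfl)

lemma evs_mem_prim_iff (p : X) : p ∈ EVS.primSpace K X ↔ p + (-1 : K) • p = 0 :=
  ⟨fun h => (EVS.primitive_iff' p).mpr h, fun h => (EVS.primitive_iff' p).mp h⟩

lemma evs_prim_add {p q : X} (hp : p ∈ EVS.primSpace K X) (hq : q ∈ EVS.primSpace K X) :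
    p + q ∈ EVS.primSpace K X := by
  rw [evs_mem_prim_iff] at hp hq ⊢
  rw [EVS.smul_add']
  calc p + q + ((-1 : K) • p + (-1 : K) • q)
      = (p + (-1 : K) • p) + (q + (-1 : K) • q) := by abel
    _ = 0 := by rw [hp, hq, add_zero]

lemma evs_prim_smul {p : X} (hp : p ∈ EVS.primSpace K X) (α : K) :
    α • p ∈ EVS.primSpace K X := by
  rw [evs_mem_prim_iff] at hp ⊢
  have h1 : (-1 : K) • (α • p) = α • ((-1 : K) • p) := by
    rw [EVS.mul_smul', EVS.mul_smul', neg_one_mul, mul_neg_one]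
  rw [h1, ← EVS.smul_add', hp, evs_smul_zero]

lemma evs_nonprim_combo {x p : X} (hx : x ∉ EVS.primSpace K X) {α : K} (hα : α ≠ 0)
    (hp : p ∈ EVS.primSpace K X) : α • x + p ∉ EVS.primSpace K X := by
  intro h
  apply hx
  rw [evs_mem_prim_iff] at h hp ⊢
  rw [EVS.smul_add'] at h
  have h2 : (α • x + (-1 : K) • (α • x)) + (p + (-1 : K) • p) = 0 := by
    calc (α • x + (-1 : K) • (α • x)) + (p + (-1 : K) • p)
        = α • x + p + ((-1 : K) • (α • x) + (-1 : K) • p) := by abel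
      _ = 0 := h
  rw [hp, add_zero] at h2
  have h3 := congrArg (fun w : X => α⁻¹ • w) h2
  simp only [evs_smul_zero] at h3
  rw [EVS.smul_add'] at h3
  have e1 : α⁻¹ • (α • x) = x := by
    rw [EVS.mul_smul', inv_mul_cancel₀ hα, EVS.one_smul']
  have e2 : α⁻¹ • ((-1 : K) • (α • x)) = (-1 : K) • x := by
    rw [EVS.mul_smul', EVS.mul_smul']
    congr 1
    field_simp
  rw [e1, e2] at h3
  exact h3

lemma evs_L_nonprim {x z : X} (hx : x ∉ EVS.primSpace K X) (hz : z ∈ EVS.L K x) :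
    z ∉ EVS.primSpace K X := by
  intro hzp
  obtain ⟨α, hα, p, hp, hle⟩ := hz
  have heq : α • x + p = z := hzp _ hle
  exact evs_nonprim_combo hx hα hp (heq ▸ hzp)

lemma evs_L_trans {b x : X} (hx : x ∈ EVS.L K b) : EVS.L K x ⊆ EVS.L K b := by
  rintro z ⟨α, hα, p, hp, hle⟩
  obtain ⟨β, hβ, q, hq, hle2⟩ := hx
  refine ⟨α * β, mul_ne_zero hα hβ, α • q + p,
    evs_prim_add (evs_prim_smul hq α) hp, ?_⟩
  have h1 : α • (β • b + q) ≤ α • x := EVS.smul_le_smul' hle2 α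
  rw [EVS.smul_add', EVS.mul_smul'] at h1
  have h2 : (α * β) • b + α • q + p ≤ α • x + p := EVS.add_le_add_right' h1 p
  calc (α * β) • b + (α • q + p) = (α * β) • b + α • q + p := by abel
    _ ≤ α • x + p := h2
    _ ≤ z := hle

lemma evs_L_of_add_prim {b z r : X} (hr : r ∈ EVS.primSpace K X)
    (h : z + r ∈ EVS.L K b) : z ∈ EVS.L K b := by
  obtain ⟨β, hβ, q, hq, hle⟩ := h
  refine ⟨β, hβ, q + (-1 : K) • r, evs_prim_add hq (evs_prim_smul hr (-1)), ?_⟩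
  have h1 := EVS.add_le_add_right' hle ((-1 : K) • r)
  have hr0 : r + (-1 : K) • r = 0 := (evs_mem_prim_iff r).mp hr
  calc β • b + (q + (-1 : K) • r) = (β • b + q) + (-1 : K) • r := by abel
    _ ≤ (z + r) + (-1 : K) • r := h1
    _ = z + (r + (-1 : K) • r) := by abel
    _ = z := by rw [hr0, add_zero]

lemma evs_key {b x z : X} (hb : b ∈ EVS.Q K X) (hxn : x ∉ EVS.primSpace K X)
    (hz : z ∈ EVS.L K x) (hcase : x ∈ EVS.L K b ∨ b ∈ EVS.L K x) : z ∈ EVS.L K b := by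
  rcases hcase with h | h
  · exact evs_L_trans h hz
  · obtain ⟨α₁, hα₁, p₁, hp₁, hle₁⟩ := h
    have hnp : α₁ • x + p₁ ∉ EVS.primSpace K X := evs_nonprim_combo hxn hα₁ hp₁
    obtain ⟨β, hβ, q, hq, hle₂⟩ := hb.2 _ hle₁ hnp
    obtain ⟨α₂, hα₂, p₂, hp₂, hle₃⟩ := hz
    set γ : K := α₂ * α₁⁻¹ with hγdef
    have hγ : γ ≠ 0 := mul_ne_zero hα₂ (inv_ne_zero hα₁)
    have h4 : γ • (β • b + q) ≤ γ • (α₁ • x + p₁) := EVS.smul_le_smul' hle₂ γ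
    rw [EVS.smul_add', EVS.smul_add', EVS.mul_smul', EVS.mul_smul'] at h4
    have hγα : γ * α₁ = α₂ := by
      rw [hγdef]; field_simp
    rw [hγα] at h4
    have h5 : α₂ • x + p₂ + γ • p₁ ≤ z + γ • p₁ := EVS.add_le_add_right' hle₃ _
    have h6 : ((γ * β) • b + γ • q) + p₂ ≤ (α₂ • x + γ • p₁) + p₂ :=
      EVS.add_le_add_right' h4 p₂
    have h7 : (γ * β) • b + (γ • q + p₂) ≤ z + γ • p₁ := by
      calc (γ * β) • b + (γ • q + p₂) = ((γ * β) • b + γ • q) + p₂ := by abel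
        _ ≤ (α₂ • x + γ • p₁) + p₂ := h6
        _ = α₂ • x + p₂ + γ • p₁ := by abel
        _ ≤ z + γ • p₁ := h5
    exact evs_L_of_add_prim (evs_prim_smul hp₁ γ)
      ⟨γ * β, mul_ne_zero hγ hβ, γ • q + p₂,
        evs_prim_add (evs_prim_smul hq γ) hp₂, h7⟩

end Helpers

/-- if `Q(X)` generates `X ∖ X₀`, then every maximal orderly independent
subset of `Q(X)` is a basis of `X ∖ X₀`. -/
theorem stmt_16 {K X : Type*} [Field K] [EVS K X]
    (hQ : EVS.Generates K (EVS.Q K X)) (B : Set X) (hBQ : B ⊆ EVS.Q K X)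
    (hind : EVS.OrderlyIndep K B)
    (hmax : ∀ C : Set X, C ⊆ EVS.Q K X → EVS.OrderlyIndep K C → B ⊆ C → B = C) :
    EVS.IsBasis K B := by
  have hQsub : EVS.Q K X ⊆ (EVS.primSpace K X)ᶜ := fun x hx => hx.1
  refine ⟨hind, hind.1, ?_⟩
  ext z
  simp only [Set.mem_iUnion]
  constructor
  · intro hz
    rw [hQ.2] at hz
    simp only [Set.mem_iUnion] at hz
    obtain ⟨x, hxQ, hzL⟩ := hz
    by_cases hxB : x ∈ B
    · exact ⟨x, hxB, hzL⟩
    · have hC : ¬ EVS.OrderlyIndep K (insert x B) := by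
        intro hCind
        have heq := hmax _ (Set.insert_subset hxQ hBQ) hCind (Set.subset_insert x B)
        exact hxB (heq ▸ Set.mem_insert x B)
      have hCsub : insert x B ⊆ (EVS.primSpace K X)ᶜ :=
        Set.insert_subset (hQsub hxQ) hind.1
      rw [EVS.OrderlyIndep, not_and] at hC
      have hC2 := hC hCsub
      push_neg at hC2
      obtain ⟨u, hu, v, hv, huv, hbad⟩ := hC2
      have hbad' : u ∈ EVS.L K v ∨ v ∈ EVS.L K u := by
        by_cases h : u ∈ EVS.L K v
        · exact Or.inl h
        · exact Or.inr (hbad h)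
      rcases Set.mem_insert_iff.mp hu with hux | huB
      · rcases Set.mem_insert_iff.mp hv with hvx | hvB
        · exact absurd (hux.trans hvx.symm) huv
        · subst hux
          exact ⟨v, hvB, evs_key (hBQ hvB) hxQ.1 hzL hbad'⟩
      · rcases Set.mem_insert_iff.mp hv with hvx | hvB
        · subst hvx
          exact ⟨u, huB, evs_key (hBQ huB) hxQ.1 hzL hbad'.symm⟩
        · obtain ⟨h1, h2⟩ := hind.2 u huB v hvB huv
          rcases hbad' with h | h
          · exact absurd h h1
          · exact absurd h h2
  · rintro ⟨b, hbB, hzL⟩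
    exact evs_L_nonprim (hBQ hbB).1 hzL
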